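/- Let φ : R_A → R_B be a graded ring isomorphism that is k-stable, and let ℓ := ht(φ(x_{k+1})) (necessarily ℓ ≥ k+1). Then there exist a nonzero rational number ε and an element w ∈ F_k(B) ⊗ ℚ such that φ(x_{k+1}) = ε(2y_ℓ − β̄_ℓ) + w in H²(B) ⊗ ℚ, where β̄_ℓ := Σ_{j=k+1}^{ℓ−1} b_{ℓ j} y_j denotes β_ℓ with its terms in F_k(B) removed. -/

import Mathlib

open MvPolynomial

namespace Bott

/-- A square integer matrix indexed by `Fin n` (rows, columns).  We think of it as the
matrix `A = (a_{ij})` defining a Bott tower; strict lower triangularity is the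
predicate `SLT` below. -/
abbrev Mat (n : ℕ) := Fin n → Fin n → ℤ

/-- `a` is strictly lower triangular: `a i j = 0` unless `j < i`. -/
def SLT {n : ℕ} (a : Mat n) : Prop := ∀ i j : Fin n, a i j ≠ 0 → (j : ℕ) < (i : ℕ)

section Defs

variable (n : ℕ)

/-- The linear form `α_i = ∑_{j<i} a_{ij} x_j` (the terms with `j ≥ i` vanish for a
strictly lower triangular matrix). -/
noncomputable def alpha (a : Mat n) (i : Fin n) : MvPolynomial (Fin n) ℤ :=
  ∑ j, C (a i j) * X j

/-- The ideal `(x_i² − α_i x_i : 1 ≤ i ≤ n)`. -/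
noncomputable def bottIdeal (a : Mat n) : Ideal (MvPolynomial (Fin n) ℤ) :=
  Ideal.span (Set.range fun i : Fin n => X i ^ 2 - alpha n a i * X i)

/-- The Bott ring `R_A = ℤ[x_1,…,x_n]/(x_i² − α_i x_i)`. -/
abbrev BRing (a : Mat n) := MvPolynomial (Fin n) ℤ ⧸ bottIdeal n a

/-- Quotient projection onto the Bott ring. -/
noncomputable def bmk (a : Mat n) : MvPolynomial (Fin n) ℤ →+* BRing n a :=
  Ideal.Quotient.mk _

/-- The class `x_i` in the Bott ring (0-based: `bx a i` is the paper's `x_{i+1}`). -/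
noncomputable def bx (a : Mat n) (i : Fin n) : BRing n a := bmk n a (X i)

/-- The class of `α_i` in the Bott ring. -/
noncomputable def bal (a : Mat n) (i : Fin n) : BRing n a := bmk n a (alpha n a i)

/-- `F_k(A)`: the span of the first `k` degree-2 generators (paper's `x_1, …, x_k`,
0-based indices `< k`). -/
noncomputable def F (a : Mat n) (k : ℕ) : Submodule ℤ (BRing n a) :=
  Submodule.span ℤ (bx n a '' {i : Fin n | (i : ℕ) < k})

/-- `H²(A)`: the span of all the degree-2 generators. -/
noncomputable def H2 (a : Mat n) : Submodule ℤ (BRing n a) :=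
  Submodule.span ℤ (Set.range (bx n a))

/-- `ht(η) = min {k | η ∈ F_k(A)}`. -/
noncomputable def ht (a : Mat n) (η : BRing n a) : ℕ := sInf {k | η ∈ F n a k}

/-- A ring isomorphism between Bott rings is graded iff it preserves the degree-2
components in both directions (both rings are generated in degree 2, so this is
equivalent to preserving the whole grading). -/
def IsGraded (a b : Mat n) (φ : BRing n a ≃+* BRing n b) : Prop :=
  (∀ z ∈ H2 n a, φ z ∈ H2 n b) ∧ (∀ z ∈ H2 n b, φ.symm z ∈ H2 n a)

/-- `φ` is `k`-stable: `φ(F_k(A)) ⊆ F_k(B)`. -/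
def IsStable (a b : Mat n) (k : ℕ) (φ : BRing n a ≃+* BRing n b) : Prop :=
  ∀ z ∈ F n a k, φ z ∈ F n b k

/-! ### Rationalizations -/

/-- The linear form `α_i` with rational coefficients. -/
noncomputable def alphaQ (a : Mat n) (i : Fin n) : MvPolynomial (Fin n) ℚ :=
  ∑ j, C ((a i j : ℚ)) * X j

noncomputable def bottIdealQ (a : Mat n) : Ideal (MvPolynomial (Fin n) ℚ) :=
  Ideal.span (Set.range fun i : Fin n => X i ^ 2 - alphaQ n a i * X i)

/-- The rationalized Bott ring `R_A ⊗ ℚ`. -/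
abbrev BRingQ (a : Mat n) := MvPolynomial (Fin n) ℚ ⧸ bottIdealQ n a

noncomputable def bmkQ (a : Mat n) : MvPolynomial (Fin n) ℚ →+* BRingQ n a :=
  Ideal.Quotient.mk _

noncomputable def bxQ (a : Mat n) (i : Fin n) : BRingQ n a := bmkQ n a (X i)

noncomputable def balQ (a : Mat n) (i : Fin n) : BRingQ n a := bmkQ n a (alphaQ n a i)

/-- `F_k(A) ⊗ ℚ` inside `R_A ⊗ ℚ`. -/
noncomputable def FQ (a : Mat n) (k : ℕ) : Submodule ℚ (BRingQ n a) :=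
  Submodule.span ℚ (bxQ n a '' {i : Fin n | (i : ℕ) < k})

/-- The canonical map `R_A → R_A ⊗ ℚ`. -/
noncomputable def toQ (a : Mat n) : BRing n a →+* BRingQ n a :=
  Ideal.Quotient.lift (bottIdeal n a)
    ((bmkQ n a).comp (MvPolynomial.map (Int.castRingHom ℚ)))
    (by
      intro p hp
      have hmap : ∀ i : Fin n,
          MvPolynomial.map (Int.castRingHom ℚ) (alpha n a i) = alphaQ n a i := by
        intro i
        simp [alpha, alphaQ, map_sum]
      have h : bottIdeal n a ≤
          Ideal.comap (MvPolynomial.map (Int.castRingHom ℚ)) (bottIdealQ n a) := by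
        rw [bottIdeal, Ideal.span_le]
        rintro _ ⟨i, rfl⟩
        simp only [SetLike.mem_coe, Ideal.mem_comap, map_sub, map_mul, map_pow,
          MvPolynomial.map_X, hmap]
        exact Ideal.subset_span ⟨i, rfl⟩
      rw [RingHom.comp_apply]
      exact Ideal.Quotient.eq_zero_iff_mem.mpr (h hp))

/-- The truncated linear form `β̄_ℓ` (rational version): for a 0-based row index `li`,
this is `∑_{k ≤ j < li} b_{li,j} y_j`, i.e. the paper's `β_ℓ` with its terms in
`F_k(B)` removed. -/
noncomputable def bbarQ (b : Mat n) (k : ℕ) (li : Fin n) : BRingQ n b :=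
  ∑ j ∈ Finset.univ.filter (fun j : Fin n => k ≤ (j : ℕ) ∧ j < li),
    (b li j : ℚ) • bxQ n b j

/-- Half of the truncated linear form `β̄_ℓ / 2` (meaningful when all relevant entries
are even), as an element of the integral Bott ring. -/
noncomputable def bbarHalf (b : Mat n) (k : ℕ) (li : Fin n) : BRing n b :=
  ∑ j ∈ Finset.univ.filter (fun j : Fin n => k ≤ (j : ℕ) ∧ j < li),
    (b li j / 2) • bx n b j

/-! ### Switching and twisting -/

/-- The matrix obtained from `b` by exchanging the rows and columns `p` and `q`. -/
def swapMat (b : Mat n) (p q : Fin n) : Mat n :=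
  fun i j => b (Equiv.swap p q i) (Equiv.swap p q j)

/-- `g : R_C → R_{C'}` is a switching isomorphism: for some `j` (0-based `J`) with
`c_{j+1,j} = 0`, `C'` is obtained from `C` by exchanging the `j`-th and `(j+1)`-st rows
and columns, and `g` swaps the `j`-th and `(j+1)`-st generators and fixes the others. -/
def IsSwitch (c c' : Mat n) (g : BRing n c ≃+* BRing n c') : Prop :=
  IsGraded n c c' g ∧
  ∃ (J : ℕ) (hJ : J + 1 < n),
    c ⟨J + 1, hJ⟩ ⟨J, by omega⟩ = 0 ∧
    c' = swapMat n c ⟨J, by omega⟩ ⟨J + 1, hJ⟩ ∧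
    ∀ i, g (bx n c i) = bx n c' (Equiv.swap (⟨J, by omega⟩ : Fin n) ⟨J + 1, hJ⟩ i)

/-- `g : R_C → R_{C'}` is a twisting isomorphism: for some `j` (0-based `J`) and
`v ∈ F_{j−1}(C)` with `v(γ_j − v) = 0`, the rows of `C'` before `j` agree with those of
`C`, `γ'_j = γ_j − 2v`, and `g` is a graded isomorphism fixing the first `j−1`
generators. -/
def IsTwist (c c' : Mat n) (g : BRing n c ≃+* BRing n c') : Prop :=
  IsGraded n c c' g ∧
  ∃ (J : ℕ) (hJ : J < n) (v : BRing n c),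
    v ∈ F n c J ∧ v * (bal n c ⟨J, hJ⟩ - v) = 0 ∧
    (∀ i : Fin n, (i : ℕ) < J → ∀ m, c' i m = c i m) ∧
    ((∑ m, c' ⟨J, hJ⟩ m • bx n c m) = bal n c ⟨J, hJ⟩ - 2 • v) ∧
    (∀ i : Fin n, (i : ℕ) < J → g (bx n c i) = bx n c' i)

/-- `IsMoveComp n c c' g` : `g : R_C → R_{C'}` is a finite (possibly empty) composition
of switching and twisting isomorphisms. -/
inductive IsMoveComp : ∀ c c' : Mat n, (BRing n c ≃+* BRing n c') → Prop
  | refl (c : Mat n) : IsMoveComp c c (RingEquiv.refl _)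
  | switch {c c' c'' : Mat n} {g : BRing n c ≃+* BRing n c'}
      {g' : BRing n c' ≃+* BRing n c''} :
      IsMoveComp c c' g → IsSwitch n c' c'' g' → IsMoveComp c c'' (g.trans g')
  | twist {c c' c'' : Mat n} {g : BRing n c ≃+* BRing n c'}
      {g' : BRing n c' ≃+* BRing n c''} :
      IsMoveComp c c' g → IsTwist n c' c'' g' → IsMoveComp c c'' (g.trans g')

end Defs

/-! ### Block matrices for ℚ-trivial Bott manifolds -/

/-- Starting (0-based) index of the `s`-th block for the partition `lam`. -/
def blockStart (t : ℕ) (lam : Fin t → ℕ) (s : Fin t) : ℕ :=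
  ∑ s' ∈ Finset.univ.filter (fun s' : Fin t => s' < s), lam s'

/-- The block-diagonal matrix with diagonal blocks `H_{λ_1}, …, H_{λ_t}`, where `H_j`
is the `j × j` strictly lower triangular matrix whose first column below the diagonal
consists of `1`s and whose other entries vanish. -/
def blockMat (n t : ℕ) (lam : Fin t → ℕ) : Mat n := fun i j =>
  if ∃ s : Fin t, (j : ℕ) = blockStart t lam s ∧ blockStart t lam s < (i : ℕ) ∧
      (i : ℕ) < blockStart t lam s + lam s then 1 else 0

/-- `H²(ℋ_{λ_s})`: the subgroup of the degree-2 component spanned by the generators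
belonging to the `s`-th block. -/
noncomputable def blockH2 (n t : ℕ) (lam : Fin t → ℕ) (s : Fin t) :
    Submodule ℤ (BRing n (blockMat n t lam)) :=
  Submodule.span ℤ (bx n (blockMat n t lam) ''
    {i : Fin n | blockStart t lam s ≤ (i : ℕ) ∧ (i : ℕ) < blockStart t lam s + lam s})

end Bott

/-
Write `η = φ(x_{k+1}) = ∑_{i ≤ ℓ} cᵢ yᵢ` with `c_ℓ ≠ 0`. Then `ℓ > k`, since otherwise `φ` would
embed the rank `k + 1` lattice `F_{k+1}(A)` into `F_k(B)`. Applying `φ` to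
`x_{k+1}² = α_{k+1} x_{k+1}` gives `η² = δ η` with `δ = φ(α_{k+1}) ∈ F_k(B)`. Over `ℚ` a homogeneous
quadratic polynomial in the ideal of relations is a combination `∑ tₘ (yₘ² − βₘ yₘ)`; comparing the
coefficients of `y_ℓ²` and of `yⱼ y_ℓ` for `k < j < ℓ` gives `t_ℓ = c_ℓ²` and
`2 cⱼ c_ℓ = −c_ℓ² b_{ℓj}`, so `cⱼ = −(c_ℓ / 2) b_{ℓj}` and `ε = c_ℓ / 2`.
-/

theorem MvPolynomial.IsHomogeneous.coeff_mul_of_degree_le {σ R : Type*} [CommSemiring R]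
    {g : MvPolynomial σ R} {m : ℕ} (hg : g.IsHomogeneous m) (r : MvPolynomial σ R)
    {d : σ →₀ ℕ} (hd : d.degree ≤ m) : coeff d (r * g) = constantCoeff r * coeff d g := by
  classical
  rw [coeff_mul, Finset.sum_eq_single (0, d)]
  · simp [constantCoeff_eq]
  · rintro ⟨u, v⟩ huv hne
    replace huv : u + v = d := Finset.HasAntidiagonal.mem_antidiagonal.1 huv
    by_cases hv : v.degree = m
    · have hu : u = 0 := by
        rw [← Finsupp.degree_eq_zero_iff]
        have := congrArg Finsupp.degree huv
        rw [map_add] at this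
        omega
      subst hu huv
      simp at hne
    · simp [hg.coeff_eq_zero hv]
  · simp

namespace Bott

variable {n : ℕ}

lemma SLT.eq_zero {b : Mat n} (hb : SLT b) {i j : Fin n} (h : (i : ℕ) ≤ j) : b i j = 0 :=
  by_contra fun h' => (hb i j h').not_ge h

section Generators

variable (b : Mat n)

lemma bx_sq (i : Fin n) : bx n b i ^ 2 = bal n b i * bx n b i := by
  rw [bx, bal, ← map_pow, ← map_mul, bmk, Ideal.Quotient.eq, bottIdeal]
  exact Ideal.subset_span ⟨i, rfl⟩

lemma bal_eq_sum (i : Fin n) : bal n b i = ∑ j, b i j • bx n b j := by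
  simp only [bal, alpha, map_sum, map_mul, bx, zsmul_eq_mul]
  refine Finset.sum_congr rfl fun j _ => ?_
  rw [← map_intCast (bmk n b), ← eq_intCast C]

lemma toQ_bx (i : Fin n) : toQ n b (bx n b i) = bxQ n b i := by
  simp [toQ, bx, bmk, bxQ, bmkQ]

lemma F_mono : Monotone (F n b) := fun _ _ hm =>
  Submodule.span_mono (Set.image_mono fun i (hi : (i : ℕ) < _) => lt_of_lt_of_le hi hm)

lemma F_self : F n b n = H2 n b := by
  rw [F, H2, ← Set.image_univ]
  congr 2
  exact Set.eq_univ_of_forall Fin.isLt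

variable {b} in
lemma mem_F_iff {m : ℕ} {z : BRing n b} :
    z ∈ F n b m ↔ ∃ c : Fin n → ℤ, (∀ i : Fin n, m ≤ i → c i = 0) ∧ z = ∑ i, c i • bx n b i := by
  classical
  constructor
  · rw [F, Finsupp.mem_span_image_iff_linearCombination]
    rintro ⟨l, hl, rfl⟩
    refine ⟨l, fun i hi => Finsupp.notMem_support_iff.1 fun h => ?_, ?_⟩
    · exact absurd (hl h) (not_lt.2 hi)
    · simp [Finsupp.linearCombination_apply, Finsupp.sum_fintype]
  · rintro ⟨c, hc, rfl⟩
    refine Submodule.sum_mem _ fun i _ => ?_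
    by_cases hi : (i : ℕ) < m
    · exact Submodule.smul_mem _ _ (Submodule.subset_span ⟨i, hi, rfl⟩)
    · simp [hc i (not_lt.1 hi)]

lemma bal_mem_F (hb : SLT b) (i : Fin n) : bal n b i ∈ F n b i := by
  rw [bal_eq_sum]
  exact mem_F_iff.2 ⟨_, fun j hj => hb.eq_zero hj, rfl⟩

lemma toQ_sum_zsmul_bx (c : Fin n → ℤ) :
    toQ n b (∑ i, c i • bx n b i) = ∑ i, (c i : ℚ) • bxQ n b i := by
  simp only [map_sum, map_zsmul, toQ_bx, Int.cast_smul_eq_zsmul]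

variable {b} in
lemma sum_smul_bxQ_mem_FQ {m : ℕ} {c : Fin n → ℚ} (hc : ∀ i : Fin n, m ≤ i → c i = 0) :
    ∑ i, c i • bxQ n b i ∈ FQ n b m := by
  refine Submodule.sum_mem _ fun i _ => ?_
  by_cases hi : (i : ℕ) < m
  · exact Submodule.smul_mem _ _ (Submodule.subset_span ⟨i, hi, rfl⟩)
  · simp [hc i (not_lt.1 hi)]

end Generators

-- `alphaQ n b i` unfolds to `linForm fun j => (b i j : ℚ)`, so the lemmas below apply to it.
noncomputable def linForm (c : Fin n → ℚ) : MvPolynomial (Fin n) ℚ := ∑ i, C (c i) * X i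

lemma isHomogeneous_linForm (c : Fin n → ℚ) : (linForm c).IsHomogeneous 1 :=
  IsHomogeneous.sum _ _ _ fun j _ => by simpa using (isHomogeneous_X ℚ j).C_mul (c j)

lemma eval_linForm (c v : Fin n → ℚ) : eval v (linForm c) = c ⬝ᵥ v := by
  simp [linForm, dotProduct]

lemma coeff_single_linForm (c : Fin n → ℚ) (j : Fin n) :
    coeff (Finsupp.single j 1) (linForm c) = c j := by
  classical
  simp [linForm, coeff_sum, coeff_C_mul, coeff_X, Finsupp.single_left_inj]

lemma sum_smul_bxQ (b : Mat n) (c : Fin n → ℚ) :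
    ∑ i, c i • bxQ n b i = bmkQ n b (linForm c) := by
  simp only [linForm, map_sum, bxQ]
  refine Finset.sum_congr rfl fun i _ => ?_
  rw [← smul_eq_C_mul, bmkQ, ← Ideal.Quotient.mkₐ_eq_mk ℚ, map_smul]

lemma isHomogeneous_bottRelQ (b : Mat n) (i : Fin n) :
    (X i ^ 2 - alphaQ n b i * X i : MvPolynomial (Fin n) ℚ).IsHomogeneous 2 :=
  (isHomogeneous_X_pow i 2).sub <| (isHomogeneous_linForm _).mul (isHomogeneous_X ℚ i)

lemma exists_coeff_eq_of_mem_bottIdealQ {b : Mat n} {p : MvPolynomial (Fin n) ℚ}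
    (hp : p ∈ bottIdealQ n b) : ∃ t : Fin n → ℚ, ∀ d : Fin n →₀ ℕ, d.degree ≤ 2 →
      coeff d p = coeff d (∑ i, C (t i) * (X i ^ 2 - alphaQ n b i * X i)) := by
  obtain ⟨r, rfl⟩ := Ideal.mem_span_range_iff_exists_fun.1 hp
  refine ⟨fun i => constantCoeff (r i), fun d hd => ?_⟩
  simp only [coeff_sum, constantCoeff_C, (isHomogeneous_bottRelQ b _).coeff_mul_of_degree_le _ hd]

lemma eq_sum_of_mem_bottIdealQ {b : Mat n} {p : MvPolynomial (Fin n) ℚ}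
    (hp : p ∈ bottIdealQ n b) (hph : p.IsHomogeneous 2) :
    ∃ t : Fin n → ℚ, p = ∑ i, C (t i) * (X i ^ 2 - alphaQ n b i * X i) := by
  obtain ⟨t, ht⟩ := exists_coeff_eq_of_mem_bottIdealQ hp
  refine ⟨t, MvPolynomial.ext _ _ fun d => ?_⟩
  by_cases hd : d.degree = 2
  · exact ht d hd.le
  · rw [hph.coeff_eq_zero hd, (IsHomogeneous.sum _ _ _ fun i _ =>
      (isHomogeneous_bottRelQ b i).C_mul (t i)).coeff_eq_zero hd]

lemma linearIndependent_bxQ (b : Mat n) : LinearIndependent ℚ (bxQ n b) := by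
  refine Fintype.linearIndependent_iff.2 fun c hc j => ?_
  rw [sum_smul_bxQ, bmkQ, Ideal.Quotient.eq_zero_iff_mem] at hc
  obtain ⟨t, ht⟩ := exists_coeff_eq_of_mem_bottIdealQ hc
  have hdeg : (Finsupp.single j 1).degree ≠ 2 := by simp
  rw [← coeff_single_linForm c j, ht _ (by simp), (IsHomogeneous.sum _ _ _ fun i _ =>
    (isHomogeneous_bottRelQ b i).C_mul (t i)).coeff_eq_zero hdeg]

lemma linearIndependent_bx (b : Mat n) : LinearIndependent ℤ (bx n b) := by
  refine LinearIndependent.of_comp (toQ n b).toAddMonoidHom.toIntLinearMap ?_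
  have : (toQ n b).toAddMonoidHom.toIntLinearMap ∘ bx n b = bxQ n b := funext (toQ_bx b)
  rw [this]
  exact (linearIndependent_bxQ b).restrict_scalars' ℤ

/-- Evaluating at `eᵢ` and `eᵢ + eⱼ` isolates the coefficients of `Xᵢ²` and `XᵢXⱼ`. -/
lemma coeff_relation_of_forall_eval {c d t : Fin n → ℚ} {β : Fin n → Fin n → ℚ}
    (hβ : ∀ i, β i i = 0)
    (h : ∀ v : Fin n → ℚ, (c ⬝ᵥ v) ^ 2 - (d ⬝ᵥ v) * (c ⬝ᵥ v) =
      ∑ m, t m * (v m ^ 2 - (β m ⬝ᵥ v) * v m)) {i j : Fin n} (hij : i ≠ j) :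
    2 * c i * c j - d i * c j - d j * c i + (c i ^ 2 - d i * c i) * β i j +
      (c j ^ 2 - d j * c j) * β j i = 0 := by
  have hdiag : ∀ i, t i = c i ^ 2 - d i * c i := fun i => by
    have hi := h (Pi.single i 1)
    rw [Fintype.sum_eq_single i fun m hm => by simp [hm]] at hi
    simpa [dotProduct_single, hβ] using hi.symm
  have hij' := h (Pi.single i 1 + Pi.single j 1)
  rw [Fintype.sum_eq_add i j hij fun m hm => by simp [hm.1, hm.2]] at hij'
  simp only [dotProduct_add, dotProduct_single, Pi.add_apply, Pi.single_eq_same,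
    Pi.single_eq_of_ne hij, Pi.single_eq_of_ne hij.symm, hβ] at hij'
  rw [hdiag i, hdiag j] at hij'
  linear_combination hij'

lemma coeff_relation_of_sq_eq_mul {b : Mat n} (hb : SLT b) {c d : Fin n → ℚ}
    (h : (∑ i, c i • bxQ n b i) ^ 2 = (∑ i, d i • bxQ n b i) * ∑ i, c i • bxQ n b i)
    {i j : Fin n} (hij : i ≠ j) :
    2 * c i * c j - d i * c j - d j * c i + (c i ^ 2 - d i * c i) * b i j +
      (c j ^ 2 - d j * c j) * b j i = 0 := by
  rw [sum_smul_bxQ, sum_smul_bxQ, ← map_pow, ← map_mul, bmkQ, Ideal.Quotient.eq] at h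
  have hhom : (linForm c ^ 2 - linForm d * linForm c).IsHomogeneous 2 :=
    ((isHomogeneous_linForm c).pow 2).sub ((isHomogeneous_linForm d).mul (isHomogeneous_linForm c))
  obtain ⟨t, ht⟩ := eq_sum_of_mem_bottIdealQ h hhom
  refine coeff_relation_of_forall_eval (t := t) (β := fun i j => (b i j : ℚ))
    (fun i => ?_) (fun v => ?_) hij
  · exact_mod_cast hb.eq_zero le_rfl
  · simpa [eval_linForm, alphaQ, dotProduct] using congrArg (eval v) ht

lemma not_mem_F_of_isStable {k : ℕ} (hk : k < n) {a b : Mat n} (φ : BRing n a ≃+* BRing n b)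
    (hst : IsStable n a b k φ) : φ (bx n a ⟨k, hk⟩) ∉ F n b k := by
  classical
  intro hη
  let x : Fin (k + 1) → BRing n a := fun j => bx n a (Fin.castLE hk j)
  let y : Fin k → BRing n b := fun i => bx n b (Fin.castLE hk.le i)
  have hF : F n b k = Submodule.span ℤ (Set.range y) := by
    refine congrArg _ (Set.ext fun z => ⟨?_, ?_⟩)
    · rintro ⟨i, hi, rfl⟩
      exact ⟨⟨i, hi⟩, rfl⟩
    · rintro ⟨i, rfl⟩
      exact ⟨_, i.isLt, rfl⟩
  have hx : LinearIndependent ℤ (φ.toAddMonoidHom.toIntLinearMap ∘ x) :=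
    ((linearIndependent_bx a).comp _ (Fin.castLE_injective hk)).map'
      _ (LinearMap.ker_eq_bot.2 φ.injective)
  have hrange : Set.range (φ.toAddMonoidHom.toIntLinearMap ∘ x) ≤ F n b k := by
    rintro _ ⟨j, rfl⟩
    rcases Nat.lt_succ_iff_lt_or_eq.1 j.isLt with hj | hj
    · exact hst _ (Submodule.subset_span ⟨_, hj, rfl⟩)
    · simpa [x, Fin.castLE, hj] using hη
  have hcard := linearIndependent_le_span_aux' _ hx _ (hF ▸ hrange)
  have := Fintype.card_range_le y
  simp only [Fintype.card_fin] at hcard this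
  omega

section Height

variable {b : Mat n} {η : BRing n b}

lemma mem_F_self (hη : η ∈ H2 n b) : η ∈ F n b n := F_self b ▸ hη

lemma mem_F_ht (hη : η ∈ H2 n b) : η ∈ F n b (ht n b η) :=
  Nat.sInf_mem (s := {m | η ∈ F n b m}) ⟨n, mem_F_self hη⟩

lemma ht_le (hη : η ∈ H2 n b) : ht n b η ≤ n :=
  Nat.sInf_le (mem_F_self hη)

lemma lt_ht_of_not_mem_F {m : ℕ} (hη : η ∈ H2 n b) (h : η ∉ F n b m) : m < ht n b η :=
  lt_of_not_ge fun hle => h (F_mono b hle (mem_F_ht hη))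

lemma exists_leading_coeff (hη : η ∈ H2 n b) {L : Fin n} (hL : (L : ℕ) + 1 = ht n b η) :
    ∃ c : Fin n → ℤ, (∀ i, L < i → c i = 0) ∧ c L ≠ 0 ∧ η = ∑ i, c i • bx n b i := by
  obtain ⟨c, hc, rfl⟩ := mem_F_iff.1 (mem_F_ht hη)
  refine ⟨c, fun i hi => hc i (by omega), fun hcL => ?_, rfl⟩
  have hlt : (L : ℕ) < ht n b (∑ i, c i • bx n b i) := by omega
  refine Nat.notMem_of_lt_sInf hlt (mem_F_iff.2 ⟨c, fun i hi => ?_, rfl⟩)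
  rcases hi.lt_or_eq with hi | hi
  · exact hc i (by omega)
  · rwa [show i = L from Fin.ext hi.symm]

end Height

lemma bbarQ_eq_sum (b : Mat n) (k : ℕ) (L : Fin n) :
    bbarQ n b k L = ∑ i : Fin n, (if k ≤ (i : ℕ) ∧ i < L then (b L i : ℚ) else 0) • bxQ n b i := by
  simp only [bbarQ, Finset.sum_filter, ite_smul, zero_smul]

lemma exists_eq_smul_add_mem_FQ {b : Mat n} {k : ℕ} {L : Fin n} (hkL : k ≤ L) {c : Fin n → ℚ}
    (htop : ∀ i, L < i → c i = 0)
    (hmid : ∀ j : Fin n, k ≤ j → j < L → c j = -(c L / 2) * b L j) :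
    ∃ w ∈ FQ n b k, ∑ i, c i • bxQ n b i = (c L / 2) • (2 * bxQ n b L - bbarQ n b k L) + w := by
  refine ⟨∑ i : Fin n, (if (i : ℕ) < k then c i else 0) • bxQ n b i,
    sum_smul_bxQ_mem_FQ fun i hi => if_neg (not_lt.2 hi), ?_⟩
  have h2 : 2 * bxQ n b L = ∑ i, (if i = L then (2 : ℚ) else 0) • bxQ n b i := by
    simp [two_mul, two_smul]
  rw [h2, bbarQ_eq_sum, ← Finset.sum_sub_distrib, Finset.smul_sum, ← Finset.sum_add_distrib]
  refine Finset.sum_congr rfl fun i _ => ?_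
  rw [← sub_smul, smul_smul, ← add_smul]
  congr 1
  rcases lt_trichotomy i L with hi | rfl | hi
  · by_cases hik : (i : ℕ) < k
    · simp [hi.ne, hik, not_le.2 hik]
    · simp [hi.ne, hik, not_lt.1 hik, hi, hmid i (not_lt.1 hik) hi]
  · simp [not_lt.2 hkL]
  · have : ¬ (i : ℕ) < k := by omega
    simp [hi.ne', hi.not_gt, this, htop i hi]

/-- Let `φ : R_A → R_B` be a `k`-stable graded ring isomorphism and
`ℓ := ht(φ(x_{k+1}))`.  Then necessarily `k + 1 ≤ ℓ ≤ n`, and there are a nonzero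
rational `ε` and `w ∈ F_k(B) ⊗ ℚ` with
`φ(x_{k+1}) = ε(2 y_ℓ − β̄_ℓ) + w` in `H²(B) ⊗ ℚ`, where
`β̄_ℓ = ∑_{j=k+1}^{ℓ−1} b_{ℓj} y_j`.  (`y_ℓ` has 0-based index `ℓ − 1`.) -/
theorem stmt_9 (n k : ℕ) (hk : k < n) (a b : Mat n) (ha : SLT a) (hb : SLT b)
    (φ : BRing n a ≃+* BRing n b) (hφ : IsGraded n a b φ)
    (hst : IsStable n a b k φ) :
    ∃ hl1 : k + 1 ≤ ht n b (φ (bx n a ⟨k, hk⟩)),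
    ∃ hln : ht n b (φ (bx n a ⟨k, hk⟩)) ≤ n,
    ∃ ε : ℚ, ε ≠ 0 ∧ ∃ w ∈ FQ n b k,
      toQ n b (φ (bx n a ⟨k, hk⟩)) =
        ε • (2 * bxQ n b ⟨ht n b (φ (bx n a ⟨k, hk⟩)) - 1, by omega⟩ -
             bbarQ n b k ⟨ht n b (φ (bx n a ⟨k, hk⟩)) - 1, by omega⟩) + w := by
  have hηH2 : φ (bx n a ⟨k, hk⟩) ∈ H2 n b := hφ.1 _ (Submodule.subset_span ⟨_, rfl⟩)
  have hkl := lt_ht_of_not_mem_F hηH2 (not_mem_F_of_isStable hk φ hst)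
  have hln := ht_le hηH2
  refine ⟨hkl, hln, ?_⟩
  set L : Fin n := ⟨ht n b (φ (bx n a ⟨k, hk⟩)) - 1, by omega⟩
  have hL : (L : ℕ) + 1 = ht n b (φ (bx n a ⟨k, hk⟩)) := Nat.sub_add_cancel (by omega)
  obtain ⟨c, hc_top, hcL, hc⟩ := exists_leading_coeff hηH2 hL
  obtain ⟨d, hd_top, hd⟩ := mem_F_iff.1 (hst _ (bal_mem_F a ha ⟨k, hk⟩))
  have hsq : (∑ i, (c i : ℚ) • bxQ n b i) ^ 2 =
      (∑ i, (d i : ℚ) • bxQ n b i) * ∑ i, (c i : ℚ) • bxQ n b i := by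
    have := congrArg (fun z => toQ n b (φ z)) (bx_sq a ⟨k, hk⟩)
    simpa only [map_pow, map_mul, hc, hd, toQ_sum_zsmul_bx] using this
  have hcLq : (c L : ℚ) ≠ 0 := Int.cast_ne_zero.2 hcL
  have hmid : ∀ j : Fin n, k ≤ j → j < L → (c j : ℚ) = -((c L : ℚ) / 2) * b L j := by
    intro j hkj hjL
    have hrel := coeff_relation_of_sq_eq_mul hb hsq hjL.ne
    rw [hd_top j hkj, hd_top L (by omega), hb.eq_zero hjL.le] at hrel
    apply mul_left_cancel₀ hcLq
    linear_combination hrel / 2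
  obtain ⟨w, hw, hsum⟩ := exists_eq_smul_add_mem_FQ (by omega) (c := fun i => (c i : ℚ))
    (fun i hi => by simp [hc_top i hi]) hmid
  exact ⟨(c L : ℚ) / 2, div_ne_zero hcLq two_ne_zero, w, hw, hc ▸ toQ_sum_zsmul_bx b c ▸ hsum⟩

end Bott
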